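/- Let μ be a nilpotent L-group and η an L-subgroup of μ having the same tip and tail as μ. Then η is a normal L-subgroup of μ if and only if η is a pronormal L-subgroup of μ. -/
import Mathlib


open scoped Classical

section Defs

variable {G : Type*} [Group G] {L : Type*} [CompletelyDistribLattice L]

/-- `μ` is an `L`-subgroup of the group `G`. -/
def IsLSubgroup (μ : G → L) : Prop :=
  (∀ x y : G, μ x ⊓ μ y ≤ μ (x * y)) ∧ (∀ x : G, μ x⁻¹ = μ x)

/-- The conjugate `η^{a_z}` of `η` by the `L`-point `a_z`. -/
def LConj (η : G → L) (a : L) (z : G) : G → L :=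
  fun x => a ⊓ η (z * x * z⁻¹)

/-- The `L`-subgroup generated by the `L`-subset `η`. -/
def LGen (η : G → L) : G → L :=
  fun x => ⨅ θ ∈ {θ : G → L | IsLSubgroup θ ∧ η ≤ θ}, θ x

/-- `η` is a pronormal `L`-subgroup of `μ`. -/
def IsLPronormal (μ η : G → L) : Prop :=
  IsLSubgroup η ∧ η ≤ μ ∧
    ∀ (a : L) (x : G), a ≤ μ x →
      ∃ (b : L) (y : G), b ≤ LGen (η ⊔ LConj η a x) y ∧ LConj η b y = LConj η a x

/-- `η` is a normal `L`-subgroup of `μ`. -/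
def IsLNormal (μ η : G → L) : Prop :=
  IsLSubgroup η ∧ η ≤ μ ∧ ∀ x y : G, η x ⊓ μ y ≤ η (y * x * y⁻¹)

/-- Set product of two `L`-subsets. -/
def LSetProd (η ν : G → L) : G → L :=
  fun x => ⨆ y : G, ⨆ z : G, ⨆ _ : y * z = x, η y ⊓ ν z

/-- The normalizer `N(η)` of `η` in `μ`. -/
def LNormalizer (μ η : G → L) : G → L :=
  fun z => sSup {a : L | a ≤ μ z ∧ LConj η a z ≤ η}

/-- The conjugate `μημ⁻¹` of `η` in `μ`. -/
def LConjAll (μ η : G → L) : G → L :=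
  fun x => ⨆ z : G, ⨆ y : G, ⨆ _ : x = z * y * z⁻¹, η y ⊓ μ z

/-- The normal closure `η^μ` of `η` in `μ`. -/
def LNormalClosure (μ η : G → L) : G → L := LGen (LConjAll μ η)

/-- The normal closure series `η₀ = μ`, `ηᵢ₊₁ = η^{ηᵢ}`. -/
def LNcSeries (μ η : G → L) : ℕ → (G → L)
  | 0 => μ
  | n + 1 => LNormalClosure (LNcSeries μ η n) η

/-- `η` is a subnormal `L`-subgroup of `μ`. -/
def IsLSubnormal (μ η : G → L) : Prop := ∃ m : ℕ, LNcSeries μ η m = η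

/-- The commutator `(η, θ)` of two `L`-subsets. -/
noncomputable def LCommFun (η θ : G → L) : G → L :=
  fun x =>
    if ∃ y z : G, x = y * z * y⁻¹ * z⁻¹ then
      ⨆ y : G, ⨆ z : G, ⨆ _ : x = y * z * y⁻¹ * z⁻¹, η y ⊓ θ z
    else (⨅ g : G, η g) ⊓ (⨅ g : G, θ g)

/-- The descending central chain `Z₀(μ) = μ`, `Zᵢ₊₁(μ) = [Zᵢ(μ), μ]`. -/
noncomputable def LDcc (μ : G → L) : ℕ → (G → L)
  | 0 => μ
  | n + 1 => LGen (LCommFun (LDcc μ n) μ)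

/-- The trivial `L`-subgroup with the same tip and tail as `μ`. -/
noncomputable def LTrivial (μ : G → L) : G → L :=
  fun x => if x = 1 then μ 1 else ⨅ g : G, μ g

/-- `μ` is a nilpotent `L`-group. -/
def IsLNilpotent (μ : G → L) : Prop := ∃ n : ℕ, LDcc μ n = LTrivial μ

/-- Sup-property of an `L`-subset. -/
def SupProp (μ : G → L) : Prop :=
  ∀ A : Set G, A.Nonempty → ∃ a ∈ A, μ a = ⨆ x ∈ A, μ x

end Defs

/-- Image of an `L`-subset under a map. -/
def LImage {G H L : Type*} [CompleteLattice L] (f : G → H) (μ : G → L) : H → L :=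
  fun y => ⨆ x : G, ⨆ _ : f x = y, μ x

section Aux
variable {G : Type*} [Group G] {L : Type*} [CompletelyDistribLattice L]

lemma IsLSubgroup.le_one {μ : G → L} (h : IsLSubgroup μ) (x : G) : μ x ≤ μ 1 := by
  have h1 := h.1 x x⁻¹
  rw [mul_inv_cancel] at h1
  exact le_trans (le_inf le_rfl (h.2 x).ge) h1

lemma IsLSubgroup.conj {μ : G → L} (h : IsLSubgroup μ) (x z : G) :
    μ x ⊓ μ z ≤ μ (z * x * z⁻¹) := by
  have h1 : μ x ⊓ μ z ≤ (μ z ⊓ μ x) ⊓ μ z⁻¹ := by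
    rw [h.2]
    exact le_inf (le_inf inf_le_right inf_le_left) inf_le_right
  exact le_trans h1 (le_trans (inf_le_inf_right _ (h.1 z x)) (h.1 (z*x) z⁻¹))

lemma le_lGen (η : G → L) : η ≤ LGen η := fun x => le_iInf₂ fun _ hθ => hθ.2 x

lemma lGen_le {η θ : G → L} (hθ : IsLSubgroup θ) (h : η ≤ θ) : LGen η ≤ θ :=
  fun x => iInf₂_le θ ⟨hθ, h⟩

lemma lGen_mono {η ζ : G → L} (h : η ≤ ζ) : LGen η ≤ LGen ζ :=
  fun x => le_iInf₂ fun θ hθ => iInf₂_le θ ⟨hθ.1, le_trans h hθ.2⟩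

lemma lGen_isLSubgroup (η : G → L) : IsLSubgroup (LGen η) := by
  constructor
  · intro x y
    refine le_iInf₂ fun θ hθ => ?_
    exact le_trans (inf_le_inf (iInf₂_le θ hθ) (iInf₂_le θ hθ)) (hθ.1.1 x y)
  · intro x
    exact le_antisymm (le_iInf₂ fun θ hθ => le_trans (iInf₂_le θ hθ) (hθ.1.2 x).le)
      (le_iInf₂ fun θ hθ => le_trans (iInf₂_le θ hθ) (hθ.1.2 x).ge)

/-- invariance of an `L`-subset under conjugation by `μ`. -/
def LInvt (μ ζ : G → L) : Prop := ∀ u x : G, ζ x ⊓ μ u ≤ ζ (u * x * u⁻¹)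

lemma lInvt_lGen {μ ζ : G → L} (hζ : LInvt μ ζ) : LInvt μ (LGen ζ) := by
  intro u x
  rw [← le_himp_iff]
  refine le_trans (iInf₂_le (fun g => μ u ⇨ LGen ζ (u * g * u⁻¹)) ⟨⟨?_, ?_⟩, ?_⟩) le_rfl
  · intro a b
    rw [le_himp_iff]
    have h1 : ((μ u ⇨ LGen ζ (u*a*u⁻¹)) ⊓ (μ u ⇨ LGen ζ (u*b*u⁻¹))) ⊓ μ u
        ≤ LGen ζ (u*a*u⁻¹) ⊓ LGen ζ (u*b*u⁻¹) :=
      le_inf (le_trans (inf_le_inf_right _ inf_le_left) himp_inf_le)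
             (le_trans (inf_le_inf_right _ inf_le_right) himp_inf_le)
    refine le_trans h1 (le_trans ((lGen_isLSubgroup ζ).1 _ _) ?_)
    rw [show u*a*u⁻¹ * (u*b*u⁻¹) = u*(a*b)*u⁻¹ by group]
  · intro a
    show μ u ⇨ LGen ζ (u * a⁻¹ * u⁻¹) = μ u ⇨ LGen ζ (u * a * u⁻¹)
    rw [show u * a⁻¹ * u⁻¹ = (u * a * u⁻¹)⁻¹ by group, (lGen_isLSubgroup ζ).2]
  · intro g
    exact le_himp_iff.mpr (le_trans (hζ u g) (le_lGen ζ _))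

lemma lInvt_comm {μ ζ : G → L} (hμ : IsLSubgroup μ) (hζ : LInvt μ ζ) :
    LInvt μ (LCommFun ζ μ) := by
  intro u x
  by_cases hx : ∃ y z : G, x = y*z*y⁻¹*z⁻¹
  · obtain ⟨y0, z0, hx0⟩ := hx
    have hx' : ∃ y z : G, u*x*u⁻¹ = y*z*y⁻¹*z⁻¹ :=
      ⟨u*y0*u⁻¹, u*z0*u⁻¹, by rw [hx0]; group⟩
    simp only [LCommFun]
    rw [if_pos ⟨y0, z0, hx0⟩, if_pos hx']
    rw [iSup_inf_eq]
    refine iSup_le fun y => ?_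
    rw [iSup_inf_eq]
    refine iSup_le fun z => ?_
    rw [iSup_inf_eq]
    refine iSup_le fun hxyz => ?_
    have hw : u*x*u⁻¹ = (u*y*u⁻¹)*(u*z*u⁻¹)*(u*y*u⁻¹)⁻¹*(u*z*u⁻¹)⁻¹ := by
      rw [hxyz]; group
    have key : ζ y ⊓ μ z ⊓ μ u ≤ ζ (u*y*u⁻¹) ⊓ μ (u*z*u⁻¹) :=
      le_inf (le_trans (inf_le_inf_right _ inf_le_left) (hζ u y))
             (le_trans (inf_le_inf_right _ inf_le_right) (hμ.conj z u))
    exact le_trans key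
      (le_iSup_of_le (u*y*u⁻¹) (le_iSup_of_le (u*z*u⁻¹) (le_iSup_of_le hw le_rfl)))
  · have hx' : ¬ ∃ y z : G, u*x*u⁻¹ = y*z*y⁻¹*z⁻¹ := by
      rintro ⟨y, z, h⟩
      refine hx ⟨u⁻¹*y*u, u⁻¹*z*u, ?_⟩
      have hx2 : x = u⁻¹*(u*x*u⁻¹)*u := by group
      rw [h] at hx2
      rw [hx2]; group
    simp only [LCommFun]
    rw [if_neg hx, if_neg hx']
    exact inf_le_left

lemma lDcc_isLSubgroup {μ : G → L} (hμ : IsLSubgroup μ) : ∀ i, IsLSubgroup (LDcc μ i)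
  | 0 => hμ
  | (_+1) => lGen_isLSubgroup _

lemma lInvt_lDcc {μ : G → L} (hμ : IsLSubgroup μ) : ∀ i, LInvt μ (LDcc μ i)
  | 0 => fun u x => hμ.conj x u
  | (i+1) => lInvt_lGen (lInvt_comm hμ (lInvt_lDcc hμ i))

lemma one_le_lDcc {μ : G → L} (hμ : IsLSubgroup μ) : ∀ i, μ 1 ≤ LDcc μ i 1
  | 0 => le_rfl
  | (i+1) => by
      refine le_trans ?_ (le_lGen _ 1)
      simp only [LCommFun]
      rw [if_pos ⟨(1:G), (1:G), by group⟩]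
      refine le_trans ?_
        (le_iSup_of_le 1 (le_iSup_of_le 1 (le_iSup_of_le (by group) le_rfl)))
      exact le_inf (one_le_lDcc hμ i) le_rfl

lemma lSetProd_isLSubgroup {μ ζ η : G → L} (hμ : IsLSubgroup μ) (hζ : IsLSubgroup ζ)
    (hi : LInvt μ ζ) (hη : IsLSubgroup η) (hle : η ≤ μ) :
    IsLSubgroup (LSetProd ζ η) := by
  have key : ∀ x : G, LSetProd ζ η x ≤ LSetProd ζ η x⁻¹ := by
    intro x
    refine iSup_le fun v => iSup_le fun h => iSup_le fun hvh => ?_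
    have hw : (h⁻¹*v⁻¹*h) * h⁻¹ = x⁻¹ := by rw [← hvh]; group
    refine le_trans (le_inf ?_ ?_)
      (le_iSup_of_le (h⁻¹*v⁻¹*h) (le_iSup_of_le h⁻¹ (le_iSup_of_le hw le_rfl)))
    · have h1 : ζ v ⊓ η h ≤ ζ v⁻¹ ⊓ μ h⁻¹ := by
        rw [hζ.2, hμ.2]
        exact inf_le_inf le_rfl (hle h)
      refine le_trans h1 (le_trans (hi h⁻¹ v⁻¹) ?_)
      rw [show h⁻¹ * v⁻¹ * h⁻¹⁻¹ = h⁻¹*v⁻¹*h by group]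
    · exact le_trans inf_le_right (hη.2 h).ge
  constructor
  · intro x x'
    simp only [LSetProd, iSup_inf_eq, inf_iSup_eq]
    refine iSup_le fun a => iSup_le fun b => iSup_le fun hab =>
      iSup_le fun c => iSup_le fun d => iSup_le fun hcd => ?_
    have hw : (c * (d*a*d⁻¹)) * (d*b) = x*x' := by rw [← hab, ← hcd]; group
    refine le_trans (le_inf ?_ ?_)
      (le_iSup_of_le (c * (d*a*d⁻¹)) (le_iSup_of_le (d*b) (le_iSup_of_le hw le_rfl)))
    · have h1 : (ζ c ⊓ η d) ⊓ (ζ a ⊓ η b) ≤ ζ c ⊓ (ζ a ⊓ μ d) :=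
        le_inf (le_trans inf_le_left inf_le_left)
          (le_inf (le_trans inf_le_right inf_le_left)
            (le_trans inf_le_left (le_trans inf_le_right (hle d))))
      exact le_trans h1 (le_trans (inf_le_inf_left _ (hi d a)) (hζ.1 _ _))
    · exact le_trans (inf_le_inf inf_le_right inf_le_right) (hη.1 d b)
  · intro x
    refine le_antisymm ?_ ?_
    · have := key x⁻¹
      rwa [inv_inv] at this
    · exact key x

lemma lConjAll_mono {μ₁ μ₂ η : G → L} (h : μ₁ ≤ μ₂) : LConjAll μ₁ η ≤ LConjAll μ₂ η :=
  fun _ => iSup_le fun z => iSup_le fun y => iSup_le fun hx =>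
    le_trans (inf_le_inf_left _ (h z))
      (le_iSup_of_le z (le_iSup_of_le y (le_iSup_of_le hx le_rfl)))

lemma conjAll_rho_le {μ η : G → L} (hμ : IsLSubgroup μ) (hη : IsLSubgroup η)
    (hle : η ≤ μ) (i : ℕ) :
    LConjAll (LSetProd (LDcc μ i) η) η ≤ LSetProd (LDcc μ (i+1)) η := by
  intro x
  refine iSup_le fun z => iSup_le fun w => iSup_le fun hx => ?_
  rw [LSetProd, inf_iSup_eq]
  refine iSup_le fun v => ?_
  rw [inf_iSup_eq]
  refine iSup_le fun h => ?_
  rw [inf_iSup_eq]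
  refine iSup_le fun hvh => ?_
  have hwit : (v*(h*w*h⁻¹)*v⁻¹*(h*w*h⁻¹)⁻¹) * (h*w*h⁻¹) = x := by
    rw [hx, ← hvh]; group
  refine le_trans (le_inf ?_ ?_)
    (le_iSup_of_le (v*(h*w*h⁻¹)*v⁻¹*(h*w*h⁻¹)⁻¹)
      (le_iSup_of_le (h*w*h⁻¹) (le_iSup_of_le hwit le_rfl)))
  · refine le_trans ?_ (le_lGen _ _)
    simp only [LCommFun]
    rw [if_pos ⟨v, h*w*h⁻¹, rfl⟩]
    refine le_trans (le_inf ?_ ?_)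
      (le_iSup_of_le v (le_iSup_of_le (h*w*h⁻¹) (le_iSup_of_le rfl le_rfl)))
    · exact le_trans inf_le_right inf_le_left
    · refine le_trans (le_inf inf_le_left (le_trans inf_le_right inf_le_right)) ?_
      exact le_trans (hη.conj w h) (hle _)
  · exact le_trans (le_inf inf_le_left (le_trans inf_le_right inf_le_right)) (hη.conj w h)

lemma ncSeries_le_rho {μ η : G → L} (hμ : IsLSubgroup μ) (hη : IsLSubgroup η)
    (hle : η ≤ μ) (htip : η 1 = μ 1) :
    ∀ i, LNcSeries μ η i ≤ LSetProd (LDcc μ i) η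
  | 0 => by
      intro x
      refine le_trans (le_inf le_rfl ?_)
        (le_iSup_of_le x (le_iSup_of_le 1 (le_iSup_of_le (mul_one x) le_rfl)))
      rw [htip]
      exact hμ.le_one x
  | (i+1) => by
      refine le_trans (lGen_mono (lConjAll_mono (ncSeries_le_rho hμ hη hle htip i))) ?_
      exact lGen_le
        (lSetProd_isLSubgroup hμ (lDcc_isLSubgroup hμ (i+1)) (lInvt_lDcc hμ (i+1)) hη hle)
        (conjAll_rho_le hμ hη hle i)

lemma eta_le_ncSeries {μ η : G → L} (hη : IsLSubgroup η) (hle : η ≤ μ) :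
    ∀ i, η ≤ LNcSeries μ η i
  | 0 => hle
  | (i+1) => by
      intro x
      refine le_trans ?_ (le_lGen _ x)
      refine le_trans (le_inf le_rfl ?_)
        (le_iSup_of_le 1 (le_iSup_of_le x (le_iSup_of_le (by group) le_rfl)))
      exact le_trans (hη.le_one x) (eta_le_ncSeries hη hle i 1)

lemma subnormal_of_nilpotent {μ η : G → L} (hμ : IsLSubgroup μ) (hnil : IsLNilpotent μ)
    (hη : IsLSubgroup η) (hle : η ≤ μ) (htip : η 1 = μ 1)
    (htail : (⨅ g : G, η g) = ⨅ g : G, μ g) :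
    ∃ n, LNcSeries μ η n = η := by
  obtain ⟨n, hn⟩ := hnil
  refine ⟨n, le_antisymm ?_ (eta_le_ncSeries hη hle n)⟩
  refine le_trans (ncSeries_le_rho hμ hη hle htip n) ?_
  intro x
  rw [LSetProd, hn]
  refine iSup_le fun v => iSup_le fun h => iSup_le fun hvh => ?_
  by_cases hv : v = 1
  · subst hv
    rw [one_mul] at hvh
    subst hvh
    simp only [LTrivial, if_pos rfl]
    exact inf_le_right
  · simp only [LTrivial, if_neg hv]
    refine le_trans inf_le_left ?_
    rw [← htail]
    exact iInf_le _ x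

lemma ncSeries_shift (μ η : G → L) :
    ∀ i, LNcSeries μ η (i+1) = LNcSeries (LNormalClosure μ η) η i
  | 0 => rfl
  | (i+1) => by
      show LNormalClosure (LNcSeries μ η (i+1)) η = _
      rw [ncSeries_shift μ η i]
      rfl

lemma normal_of_pronormal_series {η : G → L} (hη : IsLSubgroup η) :
    ∀ (m : ℕ) (μ : G → L), IsLSubgroup μ → IsLPronormal μ η →
      LNcSeries μ η m = η → IsLNormal μ η
  | 0, μ, hμ, hpro, hser => by
      refine ⟨hη, hpro.2.1, fun x y => ?_⟩
      have hμη : μ = η := hser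
      rw [hμη]
      exact hη.conj x y
  | (m+1), μ, hμ, hpro, hser => by
      have hνsub : IsLSubgroup (LNormalClosure μ η) := lGen_isLSubgroup _
      have hνμ : LNormalClosure μ η ≤ μ := by
        refine lGen_le hμ fun x => iSup_le fun z => iSup_le fun y => iSup_le fun hx => ?_
        rw [hx]
        exact le_trans (inf_le_inf_right _ (hpro.2.1 y)) (hμ.conj y z)
      have hην : η ≤ LNormalClosure μ η := eta_le_ncSeries hη hpro.2.1 1
      have hproν : IsLPronormal (LNormalClosure μ η) η :=
        ⟨hη, hην, fun a x ha => hpro.2.2 a x (le_trans ha (hνμ x))⟩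
      have hserν : LNcSeries (LNormalClosure μ η) η m = η := by
        rw [← ncSeries_shift]; exact hser
      have hnorm : IsLNormal (LNormalClosure μ η) η :=
        normal_of_pronormal_series hη m _ hνsub hproν hserν
      refine ⟨hη, hpro.2.1, fun x z => ?_⟩
      have key : ∀ (a : L) (z : G), a ≤ μ z → ∀ g, a ⊓ η (z*g*z⁻¹) ≤ η g := by
        intro a z haz g
        obtain ⟨b, y, hby, heq⟩ := hpro.2.2 a z haz
        have hconj : LConj η a z ≤ LNormalClosure μ η := by
          intro g'
          refine le_trans ?_ (le_lGen _ g')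
          refine le_trans (le_inf inf_le_right
            (le_trans inf_le_left (le_trans haz (hμ.2 z).ge)))
            (le_iSup_of_le z⁻¹ (le_iSup_of_le (z*g'*z⁻¹) (le_iSup_of_le (by group) le_rfl)))
        have hbν : b ≤ LNormalClosure μ η y :=
          le_trans hby (lGen_le hνsub (sup_le hην hconj) y)
        have heg := congrFun heq g
        rw [show a ⊓ η (z*g*z⁻¹) = LConj η a z g from rfl, ← heg]
        calc LConj η b y g = b ⊓ η (y*g*y⁻¹) := rfl
          _ ≤ LNormalClosure μ η y⁻¹ ⊓ η (y*g*y⁻¹) := by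
              rw [hνsub.2]; exact inf_le_inf_right _ hbν
          _ ≤ η (y⁻¹ * (y*g*y⁻¹) * y⁻¹⁻¹) := by
              rw [inf_comm]; exact hnorm.2.2 _ _
          _ = η g := by rw [show y⁻¹ * (y*g*y⁻¹) * y⁻¹⁻¹ = g by group]
      have h2 := key (η x ⊓ μ z) z⁻¹ (le_trans inf_le_right (hμ.2 z).ge) (z*x*z⁻¹)
      rw [show z⁻¹ * (z*x*z⁻¹) * z⁻¹⁻¹ = x by group] at h2
      exact le_trans (le_inf le_rfl inf_le_left) h2

end Aux
theorem stmt19 {G : Type*} [Group G] {L : Type*} [CompletelyDistribLattice L]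
    (μ η : G → L) (hμ : IsLSubgroup μ) (hnil : IsLNilpotent μ)
    (hη : IsLSubgroup η) (hle : η ≤ μ)
    (htip : η 1 = μ 1) (htail : (⨅ g : G, η g) = ⨅ g : G, μ g) :
    IsLNormal μ η ↔ IsLPronormal μ η := by
  constructor
  · intro hnorm
    refine ⟨hη, hle, fun a x hax => ⟨a, 1, ?_, ?_⟩⟩
    · refine le_iInf₂ fun θ hθ => ?_
      have h1 : a ≤ (η ⊔ LConj η a x) 1 := by
        refine le_trans ?_ le_sup_right
        simp only [LConj, mul_one]
        rw [mul_inv_cancel]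
        exact le_inf le_rfl (by rw [htip]; exact le_trans hax (hμ.le_one x))
      exact le_trans h1 (hθ.2 1)
    · funext g
      simp only [LConj, one_mul, mul_one, inv_one]
      refine le_antisymm (le_inf inf_le_left ?_) (le_inf inf_le_left ?_)
      · exact le_trans (le_inf inf_le_right (le_trans inf_le_left hax)) (hnorm.2.2 g x)
      · have h3 := hnorm.2.2 (x*g*x⁻¹) x⁻¹
        rw [show x⁻¹ * (x*g*x⁻¹) * x⁻¹⁻¹ = g by group] at h3
        exact le_trans (le_inf inf_le_right
          (le_trans inf_le_left (le_trans hax (hμ.2 x).ge))) h3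
  · intro hpro
    obtain ⟨n, hser⟩ := subnormal_of_nilpotent hμ hnil hη hle htip htail
    exact normal_of_pronormal_series hη n μ hμ hpro hser
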